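/- For each r > 0 there exists a constant C > 0 (depending only on r) such that H(α,r) ≤ C·|α| for all α ∈ ℂ with Re α ≥ 0 and |α| ≥ 1. -/

import Mathlib

/-- `w α r = √(1 + α² sinh² r)` (principal branch). -/
noncomputable def w (α : ℂ) (r : ℝ) : ℂ :=
  (1 + α ^ 2 * (Real.sinh r : ℂ) ^ 2) ^ (1 / 2 : ℂ)

/-- `φ(α,r) = α log((α cosh r + w)/√(α²−1)) + (1/2) log((cosh r − w)/(cosh r + w))`
(principal branches). -/
noncomputable def phi (α : ℂ) (r : ℝ) : ℂ :=
  α * Complex.log ((α * (Real.cosh r : ℂ) + w α r) / ((α ^ 2 - 1) ^ (1 / 2 : ℂ))) +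
    (1 / 2 : ℂ) * Complex.log (((Real.cosh r : ℂ) - w α r) / ((Real.cosh r : ℂ) + w α r))
/-- `H(α,r) = Re[2α log(α cosh r + w) − α log(α²−1)]
  + log|(cosh r − w)/(cosh r + w)|` where `w = √(1 + α² sinh² r)`
(principal branches). -/
noncomputable def H (α : ℂ) (r : ℝ) : ℝ :=
  (2 * α * Complex.log (α * (Real.cosh r : ℂ) + w α r) -
      α * Complex.log (α ^ 2 - 1)).re +
    Real.log (‖((Real.cosh r : ℂ) - w α r) / ((Real.cosh r : ℂ) + w α r)‖)


/-!
With `z = α cosh r + w` one has `z (α cosh r - w) = α² - 1` and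
`(cosh r - w)(cosh r + w) = sinh² r (1 - α²)`. Up to the arguments, which cost at most `3π|α|`,
and the nonpositive term `-2 log |cosh r + w|`, `H` equals
`2 Re α log |z| + (1 - Re α) log |α² - 1| + 2 log sinh r`. As `|z| ≤ 2 eʳ |α|`, this is linear
in `|α|` when `Re α ≤ 1`. When `Re α > 1`, the bound `|α² - 1| ≥ |α| |α - 1|` leaves the term
`(Re α - 1) log (|α| / |α - 1|) ≤ (Re α - 1) / |α - 1| ≤ 1`.
-/
open Real

namespace Complex

lemma cpow_one_div_two_sq (x : ℂ) : (x ^ (1 / 2 : ℂ)) ^ 2 = x := by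
  simpa only [one_div] using cpow_ofNat_inv_pow x 2

lemma re_cpow_one_div_two_nonneg (x : ℂ) : 0 ≤ (x ^ (1 / 2 : ℂ)).re := by
  rw [one_div, cpow_inv_two_re]
  exact Real.sqrt_nonneg _

lemma abs_re_mul_log_sub_le (α z : ℂ) :
    |(α * log z).re - α.re * Real.log ‖z‖| ≤ π * ‖α‖ := by
  have hre : (α * log z).re - α.re * Real.log ‖z‖ = -(α.im * z.arg) := by
    simp only [mul_re, log_re, log_im]
    ring
  rw [hre, abs_neg, abs_mul, mul_comm π]
  exact mul_le_mul (abs_im_le_norm α) (abs_arg_le_pi z) (abs_nonneg _) (norm_nonneg α)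

lemma norm_le_norm_add_one {α : ℂ} (hα : 0 ≤ α.re) : ‖α‖ ≤ ‖α + 1‖ := by
  rw [← sq_le_sq₀ (norm_nonneg _) (norm_nonneg _), Complex.sq_norm, Complex.sq_norm,
    normSq_apply, normSq_apply]
  simp only [add_re, one_re, add_im, one_im, add_zero]
  nlinarith

lemma norm_mul_norm_sub_one_le {α : ℂ} (hα : 0 ≤ α.re) : ‖α‖ * ‖α - 1‖ ≤ ‖α ^ 2 - 1‖ := by
  rw [show α ^ 2 - 1 = (α + 1) * (α - 1) by ring, norm_mul]
  exact mul_le_mul_of_nonneg_right (norm_le_norm_add_one hα) (norm_nonneg _)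

lemma sq_sub_one_ne_zero {α : ℂ} (hα : 0 ≤ α.re) (hα1 : α ≠ 1) : α ^ 2 - 1 ≠ 0 := by
  rw [sub_ne_zero, Ne, sq_eq_one_iff, not_or]
  refine ⟨hα1, fun h => ?_⟩
  rw [h] at hα
  norm_num at hα

end Complex

lemma Real.mul_log_sub_log_le_one {t u A : ℝ} (ht : 0 ≤ t) (htu : t ≤ u) (hA : 0 < A)
    (hAu : A ≤ u + 1) : t * (log A - log u) ≤ 1 := by
  rcases ht.eq_or_lt with rfl | ht
  · simp
  have hu : 0 < u := ht.trans_le htu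
  have hlog : log A - log u ≤ 1 / u := by
    rw [← log_div hA.ne' hu.ne']
    have := log_le_sub_one_of_pos (div_pos hA hu)
    have : A / u - 1 ≤ 1 / u := by
      rw [div_sub_one hu.ne', div_le_div_iff_of_pos_right hu]
      linarith
    linarith
  calc t * (log A - log u) ≤ t * (1 / u) := mul_le_mul_of_nonneg_left hlog ht.le
    _ ≤ 1 := by rwa [mul_one_div, div_le_one hu]

section
variable (α : ℂ) (r : ℝ)

lemma w_sq : w α r ^ 2 = 1 + α ^ 2 * (sinh r : ℂ) ^ 2 :=
  Complex.cpow_one_div_two_sq _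

lemma re_w_nonneg : 0 ≤ (w α r).re :=
  Complex.re_cpow_one_div_two_nonneg _

lemma norm_w_le (hr : 0 ≤ r) : ‖w α r‖ ≤ 1 + ‖α‖ * sinh r := by
  have hs : 0 ≤ sinh r := sinh_nonneg_iff.2 hr
  rw [← pow_le_pow_iff_left₀ (norm_nonneg _) (by positivity) two_ne_zero, ← norm_pow, w_sq]
  calc ‖1 + α ^ 2 * (sinh r : ℂ) ^ 2‖ ≤ 1 + ‖α‖ ^ 2 * sinh r ^ 2 := by
        refine (norm_add_le _ _).trans_eq ?_
        rw [norm_one, norm_mul, norm_pow, norm_pow, Complex.norm_real, Real.norm_of_nonneg hs]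
    _ ≤ (1 + ‖α‖ * sinh r) ^ 2 := by nlinarith [mul_nonneg (norm_nonneg α) hs]

lemma cosh_sq_sub_sinh_sq_ofReal : (cosh r : ℂ) ^ 2 - (sinh r : ℂ) ^ 2 = 1 := by
  exact_mod_cast cosh_sq_sub_sinh_sq r

lemma mul_cosh_add_w_mul_mul_cosh_sub_w :
    (α * cosh r + w α r) * (α * cosh r - w α r) = α ^ 2 - 1 := by
  linear_combination α ^ 2 * cosh_sq_sub_sinh_sq_ofReal r - w_sq α r

lemma cosh_sub_w_mul_cosh_add_w :
    ((cosh r : ℂ) - w α r) * (cosh r + w α r) = (sinh r : ℂ) ^ 2 * (1 - α ^ 2) := by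
  linear_combination cosh_sq_sub_sinh_sq_ofReal r - w_sq α r

lemma one_le_norm_cosh_add_w : 1 ≤ ‖(cosh r : ℂ) + w α r‖ :=
  calc 1 ≤ cosh r + (w α r).re := by linarith [one_le_cosh r, re_w_nonneg α r]
    _ = ((cosh r : ℂ) + w α r).re := by simp
    _ ≤ _ := Complex.re_le_norm _

lemma norm_mul_cosh_add_w_le (hr : 0 ≤ r) (hα : 1 ≤ ‖α‖) :
    ‖α * cosh r + w α r‖ ≤ 2 * exp r * ‖α‖ :=
  calc ‖α * cosh r + w α r‖ ≤ ‖α‖ * cosh r + (1 + ‖α‖ * sinh r) := by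
        refine (norm_add_le _ _).trans (add_le_add (le_of_eq ?_) (norm_w_le α r hr))
        rw [norm_mul, Complex.norm_real, Real.norm_of_nonneg (cosh_pos r).le]
    _ ≤ ‖α‖ * (cosh r + sinh r) + ‖α‖ * exp r := by
        nlinarith [one_le_exp hr]
    _ = 2 * exp r * ‖α‖ := by rw [cosh_add_sinh]; ring

end

lemma H_one (r : ℝ) : H 1 r = 2 * Real.log (2 * cosh r) := by
  have hw : w 1 r = cosh r := by
    have h := cosh_sub_w_mul_cosh_add_w 1 r
    rw [one_pow, sub_self, mul_zero, mul_eq_zero] at h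
    refine (sub_eq_zero.1 (h.resolve_right ?_)).symm
    exact norm_ne_zero_iff.1 (one_pos.trans_le (one_le_norm_cosh_add_w 1 r)).ne'
  rw [H, hw]
  simp [Complex.log_re, ← two_mul, -Complex.ofReal_cosh, abs_of_pos (cosh_pos r)]

lemma H_le_of_sq_sub_one_ne_zero {α : ℂ} {r : ℝ} (hr : 0 < r) (hα : α ^ 2 - 1 ≠ 0) :
    H α r ≤ 2 * α.re * Real.log ‖α * cosh r + w α r‖ + (1 - α.re) * Real.log ‖α ^ 2 - 1‖ +
      3 * π * ‖α‖ + 2 * Real.log (sinh r) := by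
  have hs : sinh r ≠ 0 := (sinh_pos_iff.2 hr).ne'
  have hadd := one_le_norm_cosh_add_w α r
  have hprod := cosh_sub_w_mul_cosh_add_w α r
  have hsub : ‖(cosh r : ℂ) - w α r‖ ≠ 0 := by
    refine norm_ne_zero_iff.2 fun h => ?_
    rw [h, zero_mul, eq_comm, mul_eq_zero, ← neg_sub, neg_eq_zero] at hprod
    exact hprod.elim (pow_ne_zero 2 (Complex.ofReal_ne_zero.2 hs)) hα
  -- the factor `cosh r - w` compensates the possible smallness of `α ^ 2 - 1`
  have hlog_prod : Real.log ‖(cosh r : ℂ) - w α r‖ + Real.log ‖(cosh r : ℂ) + w α r‖ =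
      2 * Real.log (sinh r) + Real.log ‖α ^ 2 - 1‖ := by
    rw [← Real.log_mul hsub (by positivity), ← norm_mul, hprod, norm_mul, ← neg_sub, norm_neg,
      norm_pow, Complex.norm_real, Real.norm_eq_abs,
      Real.log_mul (by positivity) (norm_ne_zero_iff.2 hα), Real.log_pow, Real.log_abs]
    push_cast
    ring
  have hz := abs_le.1 (Complex.abs_re_mul_log_sub_le α (α * cosh r + w α r))
  have hq := abs_le.1 (Complex.abs_re_mul_log_sub_le α (α ^ 2 - 1))
  have hlog_add := Real.log_nonneg hadd
  rw [H, norm_div, Real.log_div hsub (by positivity), Complex.sub_re, mul_assoc, two_mul,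
    Complex.add_re]
  linarith

lemma two_re_mul_log_add_one_sub_re_mul_log_le {α z : ℂ} {K : ℝ} (hK : 0 ≤ K)
    (hre : 0 ≤ α.re) (hα : 1 ≤ ‖α‖) (hα1 : α ≠ 1) (hz : z ≠ 0) (hzα : ‖z‖ ≤ exp K * ‖α‖) :
    2 * α.re * Real.log ‖z‖ + (1 - α.re) * Real.log ‖α ^ 2 - 1‖ ≤ (2 * K + 3) * ‖α‖ := by
  set A := ‖α‖
  have hA : 0 < A := one_pos.trans_le hα
  have hlogA : Real.log A ≤ A := by linarith [log_le_sub_one_of_pos hA]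
  have hu : 0 < ‖α - 1‖ := norm_pos_iff.2 (sub_ne_zero.2 hα1)
  have hq : 0 < ‖α ^ 2 - 1‖ := norm_pos_iff.2 (Complex.sq_sub_one_ne_zero hre hα1)
  have hLz : Real.log ‖z‖ ≤ K + Real.log A :=
    calc Real.log ‖z‖ ≤ Real.log (exp K * A) := log_le_log (norm_pos_iff.2 hz) hzα
      _ = K + Real.log A := by rw [log_mul (exp_pos K).ne' hA.ne', log_exp]
  rcases le_or_gt α.re 1 with ha | ha
  · have hL₂ : Real.log ‖α ^ 2 - 1‖ ≤ Real.log 2 + 2 * Real.log A :=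
      calc Real.log ‖α ^ 2 - 1‖ ≤ Real.log (2 * A ^ 2) := by
            refine log_le_log hq ((norm_sub_le _ _).trans ?_)
            rw [norm_pow, norm_one]
            nlinarith
        _ = Real.log 2 + 2 * Real.log A := by
            rw [log_mul two_ne_zero (by positivity), log_pow, Nat.cast_ofNat]
    have hlog2 : Real.log 2 ≤ 1 := by linarith [log_le_sub_one_of_pos two_pos]
    calc 2 * α.re * Real.log ‖z‖ + (1 - α.re) * Real.log ‖α ^ 2 - 1‖
        ≤ 2 * α.re * (K + Real.log A) + (1 - α.re) * (Real.log 2 + 2 * Real.log A) := by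
          gcongr
      _ = 2 * α.re * K + (1 - α.re) * Real.log 2 + 2 * Real.log A := by ring
      _ ≤ (2 * K + 3) * A := by
          nlinarith [mul_le_mul_of_nonneg_left ha hK, mul_le_mul_of_nonneg_left hα hK,
            mul_le_mul_of_nonneg_left hlog2 (sub_nonneg.2 ha)]
  · have hL₂ : Real.log A + Real.log ‖α - 1‖ ≤ Real.log ‖α ^ 2 - 1‖ := by
      rw [← log_mul hA.ne' hu.ne']
      exact log_le_log (mul_pos hA hu) (Complex.norm_mul_norm_sub_one_le hre)
    have hre_sub : α.re - 1 ≤ ‖α - 1‖ := by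
      simpa using Complex.re_le_norm (α - 1)
    have hA_sub : A ≤ ‖α - 1‖ + 1 := by
      linarith [norm_sub_norm_le α 1, norm_one (α := ℂ)]
    have hcross := mul_log_sub_log_le_one (sub_nonneg.2 ha.le) hre_sub hA hA_sub
    calc 2 * α.re * Real.log ‖z‖ + (1 - α.re) * Real.log ‖α ^ 2 - 1‖
        ≤ 2 * α.re * (K + Real.log A) - (α.re - 1) * (Real.log A + Real.log ‖α - 1‖) := by
          have := mul_le_mul_of_nonneg_left hL₂ (sub_nonneg.2 ha.le)
          have := mul_le_mul_of_nonneg_left hLz (by linarith : 0 ≤ 2 * α.re)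
          linarith
      _ = 2 * α.re * K + 2 * Real.log A + (α.re - 1) * (Real.log A - Real.log ‖α - 1‖) := by ring
      _ ≤ (2 * K + 3) * A := by
          nlinarith [mul_le_mul_of_nonneg_left (Complex.re_le_norm α) hK]

/-- For each `r > 0` there is `C > 0` with `H(α,r) ≤ C|α|` for all `α` with
`Re α ≥ 0` and `|α| ≥ 1`. -/
theorem H_linear_bound (r : ℝ) (hr : 0 < r) :
    ∃ C > (0 : ℝ), ∀ α : ℂ, 0 ≤ α.re → 1 ≤ ‖α‖ →
      H α r ≤ C * ‖α‖ := by
  have hlog2 : 0 < Real.log 2 := log_pos one_lt_two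
  have hcosh : cosh r ≤ exp r := by linarith [cosh_add_sinh r, sinh_pos_iff.2 hr]
  have hlog_sinh : Real.log (sinh r) ≤ r :=
    (log_le_log (sinh_pos_iff.2 hr) (by linarith [cosh_add_sinh r, cosh_pos r])).trans_eq
      (log_exp r)
  refine ⟨4 * r + 2 * Real.log 2 + 3 + 3 * π, by positivity, fun α hre hα => ?_⟩
  rcases eq_or_ne α 1 with rfl | hα1
  · have : Real.log (2 * cosh r) ≤ Real.log 2 + r := by
      calc Real.log (2 * cosh r) ≤ Real.log (2 * exp r) :=
            log_le_log (by positivity) (by linarith)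
        _ = Real.log 2 + r := by rw [log_mul two_ne_zero (exp_pos r).ne', log_exp]
    rw [H_one, norm_one, mul_one]
    linarith [pi_pos]
  · have hq := Complex.sq_sub_one_ne_zero hre hα1
    have hz : α * cosh r + w α r ≠ 0 :=
      left_ne_zero_of_mul (by rwa [mul_cosh_add_w_mul_mul_cosh_sub_w])
    have hgrowth := two_re_mul_log_add_one_sub_re_mul_log_le (K := r + Real.log 2)
      (by positivity) hre hα hα1 hz
      (by rw [exp_add, exp_log two_pos, mul_comm (exp r)]
          exact norm_mul_cosh_add_w_le α r hr.le hα)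
    linarith [H_le_of_sq_sub_one_ne_zero hr hq, mul_le_mul_of_nonneg_left hα hr.le]
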